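/- Let f : ℝ₊ × X → X be a continuous semiflow on a metric space X and x ∈ X a point admitting a minimal center of attraction C_x. Then C_x is invariant under the semiflow: for every y ∈ C_x and t ≥ 0, f(t,y) ∈ C_x. -/

import Mathlib

/-! If `z = f t y` lay outside the closed set `C`, let `d = infDist z C > 0`. The orbit of `x`
spends a set of times of density one in the `d/2`-thickening of `C`, which is disjoint from the
ball of radius `d/2` around `z`, so it visits that ball only at times of density zero. By
continuity of `f t`, a visit to a small ball around `y` at time `s` gives a visit to the ball
around `z` at time `s + t`; hence that small ball around `y` is also visited with density zero.
Then `C` minus a smaller ball around `y` is still a center of attraction, although it is a proper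
subset of `C`: this contradicts minimality. -/

open MeasureTheory Filter Metric Set Topology
open scoped Classical

noncomputable section

/-- The set `S ⊆ ℝ` has density `α` in `[0,∞)`. -/
def HasDens (S : Set ℝ) (α : ℝ) : Prop :=
  Filter.Tendsto (fun T : ℝ => (MeasureTheory.volume (S ∩ Set.Icc 0 T)).toReal / T)
    Filter.atTop (nhds α)

/-- `f` is a continuous semiflow on `X` (time in `[0,∞)`). -/
def IsSemiflow {X : Type*} [MetricSpace X] (f : ℝ → X → X) : Prop :=
  ContinuousOn (fun p : ℝ × X => f p.1 p.2) (Set.Ici 0 ×ˢ Set.univ) ∧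
  (∀ x : X, f 0 x = x) ∧
  (∀ s t : ℝ, 0 ≤ s → 0 ≤ t → ∀ x : X, f s (f t x) = f (s + t) x)

/-- `C` is a center of attraction of the motion `f (t, x)`. -/
def IsCtr {X : Type*} [MetricSpace X] (f : ℝ → X → X) (x : X) (C : Set X) : Prop :=
  IsClosed C ∧ ∀ ε > (0 : ℝ), HasDens {t : ℝ | 0 ≤ t ∧ f t x ∈ Metric.thickening ε C} 1

/-- `C` is the minimal center of attraction of the motion `f (t, x)`. -/
def IsMCA {X : Type*} [MetricSpace X] (f : ℝ → X → X) (x : X) (C : Set X) : Prop :=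
  IsCtr f x C ∧ ∀ C' ⊆ C, IsCtr f x C' → C' = C

lemma volume_inter_Icc_ne_top (S : Set ℝ) (T : ℝ) : volume (S ∩ Icc 0 T) ≠ ⊤ :=
  ne_top_of_le_ne_top (by simp [Real.volume_Icc]) (measure_mono inter_subset_right)

lemma measureReal_inter_Icc_le (S : Set ℝ) {T : ℝ} (hT : 0 ≤ T) :
    volume.real (S ∩ Icc 0 T) ≤ T := by
  calc volume.real (S ∩ Icc 0 T) ≤ volume.real (Icc (0 : ℝ) T) :=
        measureReal_mono inter_subset_right (by simp [Real.volume_Icc])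
    _ = T := by simp [hT]

namespace HasDens

lemma one_of_subset_union {D D' A : Set ℝ} (hD : HasDens D 1) (hA : HasDens A 0)
    (hsub : D ⊆ D' ∪ A) : HasDens D' 1 := by
  have hlow := hD.sub hA
  rw [sub_zero] at hlow
  refine tendsto_of_tendsto_of_tendsto_of_le_of_le' hlow tendsto_const_nhds ?_ ?_
  · filter_upwards [eventually_gt_atTop 0] with T hT
    rw [sub_le_iff_le_add, ← add_div]
    gcongr
    calc volume.real (D ∩ Icc 0 T) ≤ volume.real (D' ∩ Icc 0 T ∪ A ∩ Icc 0 T) :=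
          measureReal_mono
            ((inter_subset_inter_left _ hsub).trans (union_inter_distrib_right ..).subset)
            (measure_union_ne_top (volume_inter_Icc_ne_top _ _) (volume_inter_Icc_ne_top _ _))
      _ ≤ _ := measureReal_union_le _ _
  · filter_upwards [eventually_gt_atTop 0] with T hT
    exact div_le_one_of_le₀ (measureReal_inter_Icc_le _ hT.le) hT.le

lemma zero_of_disjoint {D B : Set ℝ} (hD : HasDens D 1) (hB : MeasurableSet B)
    (hBD : Disjoint D B) : HasDens B 0 := by
  have hup := (tendsto_const_nhds (x := (1 : ℝ))).sub hD
  rw [sub_self] at hup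
  refine tendsto_of_tendsto_of_tendsto_of_le_of_le' tendsto_const_nhds hup ?_ ?_
  · filter_upwards [eventually_gt_atTop 0] with T hT
    positivity
  · filter_upwards [eventually_gt_atTop 0] with T hT
    rw [le_sub_iff_add_le', ← add_div, div_le_one hT]
    calc volume.real (D ∩ Icc 0 T) + volume.real (B ∩ Icc 0 T)
        = volume.real (D ∩ Icc 0 T ∪ B ∩ Icc 0 T) :=
          (measureReal_union (hBD.mono inter_subset_left inter_subset_left)
            (hB.inter measurableSet_Icc) (volume_inter_Icc_ne_top _ _)
            (volume_inter_Icc_ne_top _ _)).symm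
      _ ≤ T := by
          rw [← union_inter_distrib_right]
          exact measureReal_inter_Icc_le _ hT.le

lemma zero_of_add_mem {A B : Set ℝ} {t : ℝ} (hB : HasDens B 0) (ht : 0 ≤ t)
    (hAB : ∀ s ∈ A, 0 ≤ s → s + t ∈ B) : HasDens A 0 := by
  have hshift (T : ℝ) : volume.real (A ∩ Icc 0 T) ≤ volume.real (B ∩ Icc 0 (T + t)) :=
    calc volume.real (A ∩ Icc 0 T) ≤ volume.real ((· + t) ⁻¹' (B ∩ Icc 0 (T + t))) :=
          measureReal_mono
            (fun s ⟨hsA, hs0, hsT⟩ => ⟨hAB s hsA hs0, by linarith, by linarith⟩)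
            (by rw [measure_preimage_add_right]; exact volume_inter_Icc_ne_top _ _)
      _ = volume.real (B ∩ Icc 0 (T + t)) :=
          congrArg ENNReal.toReal (measure_preimage_add_right ..)
  have hratio : Tendsto (fun T : ℝ => (T + t) / T) atTop (𝓝 1) := by
    have h := tendsto_const_nhds (x := (1 : ℝ)).add
      ((tendsto_const_nhds (x := t)).div_atTop tendsto_id)
    rw [add_zero] at h
    refine h.congr' ?_
    filter_upwards [eventually_gt_atTop 0] with T hT
    simp only [id]
    field_simp
  have hup := hratio.mul (hB.comp (tendsto_atTop_add_const_right atTop t tendsto_id))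
  rw [mul_zero] at hup
  refine tendsto_of_tendsto_of_tendsto_of_le_of_le' tendsto_const_nhds hup ?_ ?_
  · filter_upwards [eventually_gt_atTop 0] with T hT
    positivity
  · filter_upwards [eventually_gt_atTop 0] with T hT
    calc volume.real (A ∩ Icc 0 T) / T ≤ volume.real (B ∩ Icc 0 (T + t)) / T :=
          div_le_div_of_nonneg_right (hshift T) hT.le
      _ = (T + t) / T * (volume.real (B ∩ Icc 0 (T + t)) / (T + t)) := by
          field_simp

end HasDens

lemma disjoint_thickening_ball_of_add_le_infDist {X : Type*} [PseudoMetricSpace X]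
    {C : Set X} {z : X} {δ r : ℝ} (h : δ + r ≤ infDist z C) :
    Disjoint (thickening δ C) (ball z r) := by
  refine disjoint_left.2 fun p hpC hpz => ?_
  obtain ⟨c, hc, hpc⟩ := mem_thickening_iff.1 hpC
  have := infDist_le_dist_of_mem (x := z) hc
  have := dist_triangle z p c
  rw [mem_ball'] at hpz
  linarith

lemma thickening_subset_thickening_diff_ball_union_ball {X : Type*} [PseudoMetricSpace X]
    {C : Set X} {y : X} {ε δ r η : ℝ} (hεδ : ε ≤ δ) (hεr : ε + r ≤ η) :
    thickening ε C ⊆ thickening δ (C \ ball y r) ∪ ball y η := by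
  intro p hp
  obtain ⟨c, hc, hpc⟩ := mem_thickening_iff.1 hp
  by_cases hcy : c ∈ ball y r
  · right
    rw [mem_ball] at hcy ⊢
    linarith [dist_triangle p c y]
  · left
    exact mem_thickening_iff.2 ⟨c, ⟨hc, hcy⟩, hpc.trans_le hεδ⟩

section Motion

variable {X : Type*} {f : ℝ → X → X} {x : X}

def visitTimes (f : ℝ → X → X) (x : X) (U : Set X) : Set ℝ := {t | 0 ≤ t ∧ f t x ∈ U}

lemma disjoint_visitTimes {U V : Set X} (h : Disjoint U V) :
    Disjoint (visitTimes f x U) (visitTimes f x V) :=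
  disjoint_left.2 fun _ hU hV => disjoint_left.1 h hU.2 hV.2

variable [MetricSpace X]

lemma IsCtr.diff_ball {C : Set X} (hC : IsCtr f x C) {y : X} {r η : ℝ}
    (hrη : r < η) (hball : HasDens (visitTimes f x (ball y η)) 0) :
    IsCtr f x (C \ ball y r) := by
  refine ⟨hC.1.sdiff isOpen_ball, fun δ hδ => ?_⟩
  refine (hC.2 (min δ (η - r)) (lt_min hδ (by linarith))).one_of_subset_union hball ?_
  rintro s ⟨hs0, hs⟩
  refine (thickening_subset_thickening_diff_ball_union_ball (min_le_left _ _) ?_ hs).imp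
    (⟨hs0, ·⟩) (⟨hs0, ·⟩)
  linarith [min_le_right δ (η - r)]

lemma IsMCA.not_hasDens_visitTimes_ball_zero {C : Set X} (hC : IsMCA f x C) {y : X}
    (hy : y ∈ C) {η : ℝ} (hη : 0 < η) : ¬ HasDens (visitTimes f x (ball y η)) 0 := by
  intro h
  have hy' : y ∈ C \ ball y (η / 2) :=
    (hC.2 _ sdiff_subset (hC.1.diff_ball (half_lt_self hη) h)).symm ▸ hy
  exact hy'.2 (mem_ball_self (half_pos hη))

namespace IsSemiflow

lemma continuous_apply (hf : IsSemiflow f) {t : ℝ} (ht : 0 ≤ t) : Continuous (f t) :=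
  hf.1.comp_continuous (continuous_const.prodMk continuous_id) fun u => ⟨ht, mem_univ u⟩

lemma continuousOn_orbit (hf : IsSemiflow f) (x : X) : ContinuousOn (fun s => f s x) (Ici 0) :=
  hf.1.comp (continuous_id.prodMk continuous_const).continuousOn fun _ hs => ⟨hs, mem_univ x⟩

lemma measurableSet_visitTimes (hf : IsSemiflow f) (x : X) {U : Set X} (hU : IsOpen U) :
    MeasurableSet (visitTimes f x U) := by
  obtain ⟨V, hV, hVU⟩ := continuousOn_iff'.1 (hf.continuousOn_orbit x) U hU
  have : visitTimes f x U = (fun s => f s x) ⁻¹' U ∩ Ici 0 := by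
    ext s
    exact and_comm
  rw [this, hVU]
  exact hV.measurableSet.inter measurableSet_Ici

end IsSemiflow

end Motion

theorem mca_invariant {X : Type*} [MetricSpace X]
    (f : ℝ → X → X) (hf : IsSemiflow f) (x : X) (C : Set X) (hC : IsMCA f x C) :
    ∀ y ∈ C, ∀ t : ℝ, 0 ≤ t → f t y ∈ C := by
  intro y hy t ht
  by_contra hz
  set d := infDist (f t y) C
  have hd : 0 < d := (hC.1.1.notMem_iff_infDist_pos ⟨y, hy⟩).1 hz
  obtain ⟨η, hη, hηz⟩ :=
    Metric.continuous_iff.1 (hf.continuous_apply ht) y (d / 2) (half_pos hd)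
  have hnear : HasDens (visitTimes f x (ball (f t y) (d / 2))) 0 :=
    (hC.1.2 (d / 2) (half_pos hd)).zero_of_disjoint (hf.measurableSet_visitTimes x isOpen_ball)
      (disjoint_visitTimes (disjoint_thickening_ball_of_add_le_infDist (by linarith)))
  refine hC.not_hasDens_visitTimes_ball_zero hy hη (hnear.zero_of_add_mem ht ?_)
  rintro s ⟨-, hs⟩ hs0
  refine ⟨by linarith, ?_⟩
  rw [add_comm, ← hf.2.2 t s ht hs0]
  exact hηz _ hs
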